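/- A set H of edges of a network N = (D, s, t) contains the edge set of a directed s–t path if and only if the vector χ_t − χ_s lies in the convex cone generated by the vectors {χ_b − χ_a : ab ∈ H}, where χ_v ∈ ℝ^{V(N)} is the indicator vector of vertex v. -/

import Mathlib

/-- A directed `s`–`t` path, recorded as its list of (distinct) vertices,
starting at `s` and ending at `t`. -/
def IsStPath {V : Type*} (s t : V) (p : List V) : Prop :=
  p.Nodup ∧ p.head? = some s ∧ p.getLast? = some t

/-- The (directed) edges of a path given by its vertex list. -/
def pathEdges {V : Type*} (p : List V) : List (V × V) := p.zip p.tail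

/-- `v` lies in the convex cone generated by `S`: it is a nonnegative linear
combination of finitely many points of `S`. -/
def InCone {E : Type*} [AddCommMonoid E] [Module ℝ E] (S : Set E) (v : E) : Prop :=
  ∃ (m : ℕ) (c : Fin m → ℝ) (x : Fin m → E),
    (∀ j, 0 ≤ c j) ∧ (∀ j, x j ∈ S) ∧ ∑ j, c j • x j = v

/-!
Along a path the vectors `χ_b - χ_a` of its edges telescope to `χ_t - χ_s`. Conversely, let
`χ_t - χ_s = ∑ c_j (χ_{b_j} - χ_{a_j})` with `c_j ≥ 0`, and sum the coordinates over a vertex set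
`F` with `s ∈ F`, `t ∉ F`: the left side gives `-1`, while the `j`-th term gives
`c_j ([b_j ∈ F] - [a_j ∈ F])`, so some edge with `c_j > 0` leaves `F`. Taking for `F` the vertices
reachable from `s` shows that `t` is reachable, and shortcutting repeated vertices turns a walk
into a path.
-/

section InCone

variable {E : Type*} [AddCommMonoid E] [Module ℝ E]

lemma inCone_list_sum {S : Set E} {l : List E} (hl : ∀ x ∈ l, x ∈ S) : InCone S l.sum :=
  ⟨l.length, fun _ => 1, fun j => l[j], fun _ => zero_le_one, fun j => hl _ (List.getElem_mem _),
    by simp [← List.sum_ofFn]⟩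

end InCone

section PathEdges

variable {V : Type*}

lemma pathEdges_cons_cons (x y : V) (l : List V) :
    pathEdges (x :: y :: l) = (x, y) :: pathEdges (y :: l) := rfl

lemma pathEdges_suffix_cons (x : V) (l : List V) : pathEdges l <:+ pathEdges (x :: l) := by
  cases l with
  | nil => simp [pathEdges]
  | cons y l => exact List.suffix_cons _ _

lemma List.IsSuffix.pathEdges {l q : List V} (h : l <:+ q) : pathEdges l <:+ pathEdges q := by
  obtain ⟨c, rfl⟩ := h
  induction c with
  | nil => simp
  | cons x c ih => exact ih.trans (pathEdges_suffix_cons x (c ++ l))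

lemma sum_map_pathEdges_sub {M : Type*} [AddCommGroup M] (f : V → M) (x : V) (l : List V) :
    ((pathEdges (x :: l)).map fun e => f e.2 - f e.1).sum =
      f ((x :: l).getLast (List.cons_ne_nil x l)) - f x := by
  induction l generalizing x with
  | nil => simp [pathEdges]
  | cons y l ih =>
    rw [pathEdges_cons_cons, List.map_cons, List.sum_cons, ih, List.getLast_cons_cons]
    abel

lemma exists_isStPath_of_reflTransGen {r : V → V → Prop} {s t : V}
    (h : Relation.ReflTransGen r s t) :
    ∃ p, IsStPath s t p ∧ ∀ e ∈ pathEdges p, r e.1 e.2 := by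
  induction h using Relation.ReflTransGen.head_induction_on with
  | refl => exact ⟨[t], ⟨List.nodup_singleton t, rfl, rfl⟩, by simp [pathEdges]⟩
  | @head a b hab _ ih =>
    obtain ⟨q, ⟨hnd, hhd, hlast⟩, hedges⟩ := ih
    obtain ⟨q, rfl⟩ := List.head?_eq_some_iff.mp hhd
    by_cases ha : a ∈ b :: q
    · -- shortcut the cycle through `a`
      obtain ⟨q₁, q₂, hsplit⟩ := List.append_of_mem ha
      have hsuf : (a :: q₂) <:+ (b :: q) := ⟨q₁, hsplit.symm⟩
      refine ⟨a :: q₂, ⟨hnd.sublist hsuf.sublist, rfl, ?_⟩,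
        fun e he => hedges e (hsuf.pathEdges.subset he)⟩
      rw [← hlast, hsplit, List.getLast?_append, List.getLast?_cons, Option.some_or]
    · refine ⟨a :: b :: q, ⟨List.nodup_cons.mpr ⟨ha, hnd⟩, rfl, ?_⟩, ?_⟩
      · rwa [List.getLast?_cons_cons]
      · rw [pathEdges_cons_cons]
        rintro e (_ | ⟨_, he⟩)
        exacts [hab, hedges e he]

end PathEdges

section Cut

variable {V ι : Type*} [DecidableEq V] [Fintype ι]

lemma exists_edge_leaving_of_sum_eq {F : Finset V} {s t : V} (hs : s ∈ F) (ht : t ∉ F)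
    {c : ι → ℝ} (hc : ∀ j, 0 ≤ c j) {e : ι → V × V}
    (hsum : ∑ j, c j • (Pi.single (e j).2 1 - Pi.single (e j).1 1 : V → ℝ) =
      Pi.single t 1 - Pi.single s 1) :
    ∃ j, 0 < c j ∧ (e j).1 ∈ F ∧ (e j).2 ∉ F := by
  by_contra! hnone
  let L : (V → ℝ) →ₗ[ℝ] ℝ := ∑ v ∈ F, LinearMap.proj v
  have hL : ∀ w, L (Pi.single w 1) = if w ∈ F then 1 else 0 := fun w => by
    simp [L, Finset.sum_pi_single']
  have hterm : ∀ j, 0 ≤ c j * L (Pi.single (e j).2 1 - Pi.single (e j).1 1) := fun j => by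
    rcases (hc j).eq_or_lt with h0 | h0
    · simp [← h0]
    · refine mul_nonneg h0.le ?_
      rw [map_sub, hL, hL]
      by_cases h1 : (e j).1 ∈ F
      · simp [h1, hnone j h0 h1]
      · simp only [h1, if_false, sub_zero]; positivity
  have hlhs : 0 ≤ L (∑ j, c j • (Pi.single (e j).2 1 - Pi.single (e j).1 1)) := by
    rw [map_sum]
    exact Finset.sum_nonneg fun j _ => by rw [map_smul, smul_eq_mul]; exact hterm j
  have hrhs : L (Pi.single t 1 - Pi.single s 1) = -1 := by simp [hL, hs, ht]
  rw [hsum, hrhs] at hlhs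
  norm_num at hlhs

end Cut

section EdgeVectors

variable {V : Type*} [DecidableEq V]

abbrev edgeVectors (H : Set (V × V)) : Set (V → ℝ) :=
  {x | ∃ e ∈ H, x = Pi.single e.2 (1 : ℝ) - Pi.single e.1 1}

variable {H : Set (V × V)} {s t : V}

lemma inCone_of_isStPath {p : List V} (hp : IsStPath s t p) (hH : ∀ e ∈ pathEdges p, e ∈ H) :
    InCone (edgeVectors H) (Pi.single t 1 - Pi.single s 1) := by
  obtain ⟨-, hhd, hlast⟩ := hp
  obtain ⟨l, rfl⟩ := List.head?_eq_some_iff.mp hhd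
  rw [List.getLast?_eq_some_getLast (List.cons_ne_nil s l), Option.some.injEq] at hlast
  rw [← hlast, ← sum_map_pathEdges_sub fun v => Pi.single v (1 : ℝ)]
  refine inCone_list_sum fun x hx => ?_
  obtain ⟨e, he, rfl⟩ := List.mem_map.mp hx
  exact ⟨e, hH e he, rfl⟩

lemma reflTransGen_of_inCone (h : InCone (edgeVectors H) (Pi.single t 1 - Pi.single s 1)) :
    Relation.ReflTransGen (fun a b => (a, b) ∈ H) s t := by
  obtain ⟨m, c, x, hc, hx, hsum⟩ := h
  choose e he hxe using hx
  obtain rfl : x = _ := funext hxe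
  by_contra hst
  classical
  let F := (insert s (Finset.univ.image fun j => (e j).2)).filter
    (Relation.ReflTransGen (fun a b => (a, b) ∈ H) s)
  obtain ⟨j, -, ha, hb⟩ := exists_edge_leaving_of_sum_eq (F := F)
    (by simp [F, Relation.ReflTransGen.refl]) (by simp [F, hst]) hc hsum
  simp only [F, Finset.mem_filter] at ha hb
  exact hb ⟨by simp, ha.2.tail (he j)⟩

end EdgeVectors

theorem stmt_16_general {V : Type*} [DecidableEq V] (s t : V)
    (H : Set (V × V)) :
    (∃ p : List V, IsStPath s t p ∧ ∀ e ∈ pathEdges p, e ∈ H) ↔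
      InCone {x : V → ℝ | ∃ e ∈ H, x = Pi.single e.2 (1 : ℝ) - Pi.single e.1 1}
        (Pi.single t (1 : ℝ) - Pi.single s 1) := by
  exact ⟨fun ⟨_, hp, hH⟩ => inCone_of_isStPath hp hH,
    fun h => exists_isStPath_of_reflTransGen (reflTransGen_of_inCone h)⟩

/-- A set `H` of edges of a network contains the edge set of a directed
`s`–`t` path iff `χ_t - χ_s` lies in the convex cone generated by the vectors
`χ_b - χ_a` for edges `ab ∈ H`. -/
theorem stmt_16 {V : Type*} [Fintype V] [DecidableEq V] (s t : V)
    (H : Set (V × V)) (hN : ∀ e ∈ H, e.2 ≠ s ∧ e.1 ≠ t) :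
    (∃ p : List V, IsStPath s t p ∧ ∀ e ∈ pathEdges p, e ∈ H) ↔
      InCone {x : V → ℝ | ∃ e ∈ H, x = Pi.single e.2 (1 : ℝ) - Pi.single e.1 1}
        (Pi.single t (1 : ℝ) - Pi.single s 1) :=
  stmt_16_general s t H
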